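/- Let Λ_{k,r} be the complete k-ary tree of rank r. Then for r ≥ 2, p(Λ_{k,r}; z) = p(Λ_{k,r−1}; z)^k + k·z·p(Λ_{k,r−2}; z)^k · p(Λ_{k,r−1}; z)^{k−1}. -/
import Mathlib


open Polynomial

variable {V : Type*}

/-- `M` (a finite set of edges) is a matching of the graph `G`:
its members are edges of `G` and no two distinct members share an endpoint. -/
def IsGraphMatching (G : SimpleGraph V) (M : Finset (Sym2 V)) : Prop :=
  (M : Set (Sym2 V)) ⊆ G.edgeSet ∧
    ∀ e ∈ M, ∀ f ∈ M, e ≠ f → ∀ x, x ∈ e → x ∉ f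

/-- The set of vertices covered by the edge set `M` is exactly `S`. -/
def Covers (M : Finset (Sym2 V)) (S : Finset V) : Prop :=
  ∀ x, x ∈ S ↔ ∃ e ∈ M, x ∈ e

/-- `M` is a perfect matching of the induced subgraph `G[S]`. -/
def IsPerfectMatchingOn (G : SimpleGraph V) (M : Finset (Sym2 V)) (S : Finset V) : Prop :=
  IsGraphMatching G M ∧ Covers M S

/-- `S` is a perfectly matchable set of `G`. -/
def IsPMS (G : SimpleGraph V) (S : Finset V) : Prop :=
  ∃ M, IsPerfectMatchingOn G M S

open Classical in
/-- The perfectly matchable set polynomial of the subgraph of `G` induced on the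
ground vertex set `A`: the generating function `∑ p_{2k} z^k` where `p_{2k}` is the number
of perfectly matchable sets `S ⊆ A` with `|S| = 2k`. -/
noncomputable def pmPoly [Fintype V] (G : SimpleGraph V) (A : Finset V) : Polynomial ℤ :=
  ∑ S ∈ A.powerset, if IsPMS G S then X ^ (S.card / 2) else 0

/-- `G` has no cycle of even length. -/
def NoEvenCycle (G : SimpleGraph V) : Prop :=
  ∀ (v : V) (c : G.Walk v v), c.IsCycle → ¬ Even c.length

/-- The complete `k`-ary tree of rank `r`: vertices are the nodes at depths `0, …, r`,
encoded as functions `Fin i → Fin k` (the sequence of branch choices), and a vertex is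
adjacent to each of its `k` children. -/
def karyTree (k r : ℕ) : SimpleGraph ((i : Fin (r + 1)) × (Fin (i : ℕ) → Fin k)) :=
  SimpleGraph.fromRel (fun a b =>
    ((b.1 : ℕ) = (a.1 : ℕ) + 1) ∧
      ∀ (t : ℕ) (h1 : t < (a.1 : ℕ)) (h2 : t < (b.1 : ℕ)), a.2 ⟨t, h1⟩ = b.2 ⟨t, h2⟩)

section Aux

set_option linter.unusedSectionVars false

variable {W : Type*} [Fintype W] [DecidableEq W] {G : SimpleGraph W}

omit [Fintype W] [DecidableEq W] in
lemma isPMS_empty (G : SimpleGraph W) : IsPMS G (∅ : Finset W) := by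
  refine ⟨∅, ⟨by simp, by simp⟩, fun x => by simp⟩

omit [Fintype W] [DecidableEq W] in
lemma endpoints_cases {e : Sym2 W} (he : e ∈ G.edgeSet) {x y : W} (hx : x ∈ e) (hy : y ∈ e) :
    x = y ∨ G.Adj x y := by
  induction e with
  | _ a b =>
    rw [Sym2.mem_iff] at hx hy
    rw [SimpleGraph.mem_edgeSet] at he
    rcases hx with rfl | rfl <;> rcases hy with rfl | rfl
    · exact Or.inl rfl
    · exact Or.inr he
    · exact Or.inr he.symm
    · exact Or.inl rfl

lemma IsPMS.even_card {S : Finset W} (h : IsPMS G S) : Even S.card := by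
  obtain ⟨M, ⟨hMe, hMm⟩, hMc⟩ := h
  have hS : S = M.biUnion (fun e => {e.out.1, e.out.2}) := by
    ext x
    simp only [Finset.mem_biUnion, Finset.mem_insert, Finset.mem_singleton, hMc x]
    constructor
    · rintro ⟨e, he, hx⟩
      refine ⟨e, he, ?_⟩
      have : e = s(e.out.1, e.out.2) := by rw [Sym2.mk, Quot.out_eq]
      rw [this, Sym2.mem_iff] at hx
      exact hx
    · rintro ⟨e, he, hx⟩
      refine ⟨e, he, ?_⟩
      rcases hx with rfl | rfl
      · exact Sym2.out_fst_mem e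
      · exact Sym2.out_snd_mem e
  have hdisj : ∀ e ∈ M, ∀ f ∈ M, e ≠ f →
      Disjoint ({e.out.1, e.out.2} : Finset W) {f.out.1, f.out.2} := by
    intro e he f hf hef
    rw [Finset.disjoint_left]
    intro x hxe hxf
    have hxe' : x ∈ e := by
      rcases Finset.mem_insert.1 hxe with rfl | h
      · exact Sym2.out_fst_mem e
      · rw [Finset.mem_singleton] at h; subst h; exact Sym2.out_snd_mem e
    have hxf' : x ∈ f := by
      rcases Finset.mem_insert.1 hxf with rfl | h
      · exact Sym2.out_fst_mem f
      · rw [Finset.mem_singleton] at h; subst h; exact Sym2.out_snd_mem f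
    exact hMm e he f hf hef x hxe' hxf'
  rw [hS, Finset.card_biUnion hdisj]
  refine Finset.even_sum _ (fun e he => ?_)
  have hd : ¬ e.IsDiag := G.not_isDiag_of_mem_edgeSet (hMe he)
  have hne : e.out.1 ≠ e.out.2 := by
    intro hcon
    apply hd
    have : e = s(e.out.1, e.out.2) := by rw [Sym2.mk, Quot.out_eq]
    rw [this, Sym2.mk_isDiag_iff]
    exact hcon
  rw [Finset.card_insert_of_notMem (by simpa using hne), Finset.card_singleton]
  exact even_two
omit [Fintype W] [DecidableEq W] in
lemma edge_endpoints_mem {M : Finset (Sym2 W)} {S : Finset W} (hMc : Covers M S)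
    {e : Sym2 W} (he : e ∈ M) {x : W} (hx : x ∈ e) : x ∈ S :=
  (hMc x).2 ⟨e, he, hx⟩

lemma isPMS_piece {ι : Type*} [DecidableEq ι] {s : Finset ι} {T : ι → Finset W}
    (hsep : ∀ c ∈ s, ∀ c' ∈ s, c ≠ c' → ∀ x ∈ T c, ∀ y ∈ T c', ¬ G.Adj x y ∧ x ≠ y)
    {S : Finset W} (hS : S ⊆ s.biUnion T) :
    IsPMS G S ↔ ∀ c ∈ s, IsPMS G (S ∩ T c) := by
  classical
  constructor
  · rintro ⟨M, ⟨hMe, hMm⟩, hMc⟩ c hc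
    have hsame : ∀ e ∈ M, ∀ x ∈ e, x ∈ T c → ∀ y ∈ e, y ∈ T c := by
      intro e he x hx hxc y hy
      have hyS : y ∈ S := edge_endpoints_mem hMc he hy
      obtain ⟨c', hc', hyc'⟩ := Finset.mem_biUnion.1 (hS hyS)
      by_cases hcc : c' = c
      · exact hcc ▸ hyc'
      · exfalso
        obtain ⟨hnadj, hne⟩ := hsep c hc c' hc' (fun h => hcc h.symm) x hxc y hyc'
        rcases endpoints_cases (hMe he) hx hy with h | h
        · exact hne h
        · exact hnadj h
    refine ⟨M.filter (fun e => ∀ x ∈ e, x ∈ T c), ⟨?_, ?_⟩, ?_⟩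
    · intro e he
      exact hMe (Finset.mem_coe.2 (Finset.mem_filter.1 (Finset.mem_coe.1 he)).1)
    · intro e he f hf hef x hxe
      exact hMm e (Finset.mem_filter.1 he).1 f (Finset.mem_filter.1 hf).1 hef x hxe
    · intro x
      constructor
      · intro hx
        obtain ⟨hxS, hxT⟩ := Finset.mem_inter.1 hx
        obtain ⟨e, he, hxe⟩ := (hMc x).1 hxS
        exact ⟨e, Finset.mem_filter.2 ⟨he, hsame e he x hxe hxT⟩, hxe⟩
      · rintro ⟨e, he, hxe⟩
        obtain ⟨heM, hall⟩ := Finset.mem_filter.1 he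
        exact Finset.mem_inter.2 ⟨edge_endpoints_mem hMc heM hxe, hall x hxe⟩
  · intro h
    have h' : ∀ c, c ∈ s → ∃ M, IsPerfectMatchingOn G M (S ∩ T c) := h
    choose F hF using h'
    refine ⟨s.attach.biUnion (fun c => F c.1 c.2), ⟨?_, ?_⟩, ?_⟩
    · intro e he
      obtain ⟨c, _, hec⟩ := Finset.mem_biUnion.1 (Finset.mem_coe.1 he)
      exact (hF c.1 c.2).1.1 (Finset.mem_coe.2 hec)
    · intro e he f hf hef x hxe hxf
      obtain ⟨c, _, hec⟩ := Finset.mem_biUnion.1 he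
      obtain ⟨c', _, hfc⟩ := Finset.mem_biUnion.1 hf
      have hxc : x ∈ S ∩ T c.1 := edge_endpoints_mem (hF c.1 c.2).2 hec hxe
      have hxc' : x ∈ S ∩ T c'.1 := edge_endpoints_mem (hF c'.1 c'.2).2 hfc hxf
      by_cases hcc : c = c'
      · subst hcc
        exact (hF c.1 c.2).1.2 e hec f hfc hef x hxe hxf
      · have hne : c.1 ≠ c'.1 := fun h => hcc (Subtype.ext h)
        exact (hsep c.1 c.2 c'.1 c'.2 hne x (Finset.mem_inter.1 hxc).2 x
          (Finset.mem_inter.1 hxc').2).2 rfl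
    · intro x
      constructor
      · intro hx
        obtain ⟨c, hc, hxc⟩ := Finset.mem_biUnion.1 (hS hx)
        obtain ⟨e, he, hxe⟩ := ((hF c hc).2 x).1 (Finset.mem_inter.2 ⟨hx, hxc⟩)
        exact ⟨e, Finset.mem_biUnion.2 ⟨⟨c, hc⟩, Finset.mem_attach _ _, he⟩, hxe⟩
      · rintro ⟨e, he, hxe⟩
        obtain ⟨c, _, hec⟩ := Finset.mem_biUnion.1 he
        exact (Finset.mem_inter.1 (edge_endpoints_mem (hF c.1 c.2).2 hec hxe)).1

lemma isPMS_split_two {A B : Finset W}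
    (hsep : ∀ x ∈ A, ∀ y ∈ B, ¬ G.Adj x y ∧ x ≠ y)
    {S : Finset W} (hS : S ⊆ A ∪ B) :
    IsPMS G S ↔ IsPMS G (S ∩ A) ∧ IsPMS G (S ∩ B) := by
  have hsep' : ∀ c ∈ (Finset.univ : Finset Bool), ∀ c' ∈ (Finset.univ : Finset Bool), c ≠ c' →
      ∀ x ∈ (if c then A else B), ∀ y ∈ (if c' then A else B), ¬ G.Adj x y ∧ x ≠ y := by
    intro c _ c' _ hcc x hx y hy
    cases c <;> cases c' <;> simp_all
    · obtain ⟨h1, h2⟩ := hsep y hy x hx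
      exact ⟨fun h => h1 h.symm, fun h => h2 h.symm⟩
  have hU : (Finset.univ : Finset Bool).biUnion (fun c => if c then A else B) = A ∪ B := by
    ext x; simp [Finset.mem_biUnion, Bool.exists_bool, or_comm]
  rw [isPMS_piece hsep' (hU ▸ hS)]
  constructor
  · intro h
    exact ⟨by simpa using h true (Finset.mem_univ _), by simpa using h false (Finset.mem_univ _)⟩
  · rintro ⟨h1, h2⟩ c _
    cases c
    · simpa using h2
    · simpa using h1

lemma card_inter_add_card_inter {A B S : Finset W} (hS : S ⊆ A ∪ B) (hd : Disjoint A B) :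
    (S ∩ A).card + (S ∩ B).card = S.card := by
  rw [← Finset.card_union_of_disjoint (hd.mono (Finset.inter_subset_right)
    (Finset.inter_subset_right))]
  congr 1
  rw [← Finset.inter_union_distrib_left]
  exact (Finset.inter_eq_left.2 hS)

open Classical in
lemma pmPoly_union {A B : Finset W}
    (hsep : ∀ x ∈ A, ∀ y ∈ B, ¬ G.Adj x y ∧ x ≠ y) :
    pmPoly G (A ∪ B) = pmPoly G A * pmPoly G B := by
  classical
  have hd : Disjoint A B := by
    rw [Finset.disjoint_left]
    intro x hxA hxB
    exact (hsep x hxA x hxB).2 rfl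
  rw [pmPoly, pmPoly, pmPoly, Finset.sum_mul_sum, ← Finset.sum_product']
  refine (Finset.sum_nbij' (fun p => p.1 ∪ p.2) (fun S => (S ∩ A, S ∩ B)) ?_ ?_ ?_ ?_ ?_).symm
  · rintro ⟨S1, S2⟩ hp
    rw [Finset.mem_product, Finset.mem_powerset, Finset.mem_powerset] at hp
    exact Finset.mem_powerset.2 (Finset.union_subset_union hp.1 hp.2)
  · intro S hS
    rw [Finset.mem_powerset] at hS
    exact Finset.mem_product.2 ⟨Finset.mem_powerset.2 Finset.inter_subset_right,
      Finset.mem_powerset.2 Finset.inter_subset_right⟩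
  · rintro ⟨S1, S2⟩ hp
    rw [Finset.mem_product, Finset.mem_powerset, Finset.mem_powerset] at hp
    have h1 : (S1 ∪ S2) ∩ A = S1 := by
      rw [Finset.union_inter_distrib_right, Finset.inter_eq_left.2 hp.1,
        (Finset.disjoint_iff_inter_eq_empty.1 ?_ : S2 ∩ A = ∅), Finset.union_empty]
      exact (hd.symm.mono_left hp.2)
    have h2 : (S1 ∪ S2) ∩ B = S2 := by
      rw [Finset.union_inter_distrib_right, Finset.inter_eq_left.2 hp.2,
        (Finset.disjoint_iff_inter_eq_empty.1 ?_ : S1 ∩ B = ∅), Finset.empty_union]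
      exact (hd.mono_left hp.1)
    simp [h1, h2]
  · intro S hS
    rw [Finset.mem_powerset] at hS
    ext x
    simp only [Finset.mem_union, Finset.mem_inter]
    constructor
    · rintro (⟨h, _⟩ | ⟨h, _⟩) <;> exact h
    · intro hx
      rcases Finset.mem_union.1 (hS hx) with h | h
      · exact Or.inl ⟨hx, h⟩
      · exact Or.inr ⟨hx, h⟩
  · rintro ⟨S1, S2⟩ hp
    dsimp only
    rw [Finset.mem_product, Finset.mem_powerset, Finset.mem_powerset] at hp
    have h1 : (S1 ∪ S2) ∩ A = S1 := by
      rw [Finset.union_inter_distrib_right, Finset.inter_eq_left.2 hp.1,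
        (Finset.disjoint_iff_inter_eq_empty.1 (hd.symm.mono_left hp.2) : S2 ∩ A = ∅),
        Finset.union_empty]
    have h2 : (S1 ∪ S2) ∩ B = S2 := by
      rw [Finset.union_inter_distrib_right, Finset.inter_eq_left.2 hp.2,
        (Finset.disjoint_iff_inter_eq_empty.1 (hd.mono_left hp.1) : S1 ∩ B = ∅),
        Finset.empty_union]
    have hsub : S1 ∪ S2 ⊆ A ∪ B := Finset.union_subset_union hp.1 hp.2
    by_cases hP : IsPMS G (S1 ∪ S2)
    · have := (isPMS_split_two hsep hsub).1 hP
      rw [h1, h2] at this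
      rw [if_pos hP, if_pos this.1, if_pos this.2, ← pow_add]
      congr 1
      have hcard := card_inter_add_card_inter hsub hd
      rw [h1, h2] at hcard
      obtain ⟨a, ha⟩ := (h1 ▸ this.1.even_card : Even S1.card)
      obtain ⟨b, hb⟩ := (h2 ▸ this.2.even_card : Even S2.card)
      omega
    · rw [if_neg hP]
      have : ¬ (IsPMS G S1 ∧ IsPMS G S2) := by
        intro ⟨hP1, hP2⟩
        exact hP ((isPMS_split_two hsep hsub).2 ⟨h1.symm ▸ hP1, h2.symm ▸ hP2⟩)
      by_cases hP1 : IsPMS G S1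
      · rw [if_neg (fun h => this ⟨hP1, h⟩), mul_zero]
      · rw [if_neg hP1, zero_mul]

lemma pmPoly_empty : pmPoly G (∅ : Finset W) = 1 := by
  rw [pmPoly, Finset.powerset_empty, Finset.sum_singleton, if_pos (isPMS_empty G)]
  simp

lemma pmPoly_biUnion {ι : Type*} [DecidableEq ι] {s : Finset ι} {T : ι → Finset W}
    (hsep : ∀ c ∈ s, ∀ c' ∈ s, c ≠ c' → ∀ x ∈ T c, ∀ y ∈ T c', ¬ G.Adj x y ∧ x ≠ y) :
    pmPoly G (s.biUnion T) = ∏ c ∈ s, pmPoly G (T c) := by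
  classical
  induction s using Finset.cons_induction with
  | empty => simpa using pmPoly_empty
  | cons a s ha ih =>
    rw [Finset.cons_eq_insert, Finset.biUnion_insert, Finset.prod_insert ha]
    rw [pmPoly_union, ih]
    · intro c hc c' hc' hcc
      exact hsep c (Finset.mem_cons_of_mem hc) c' (Finset.mem_cons_of_mem hc') hcc
    · intro x hx y hy
      obtain ⟨c, hc, hyc⟩ := Finset.mem_biUnion.1 hy
      exact hsep a (Finset.mem_cons_self _ _) c (Finset.mem_cons_of_mem hc)
        (fun h => ha (h ▸ hc)) x hx y hyc

lemma isPMS_image {W' : Type*} {H : SimpleGraph W'} {φ : W' → W}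
    (hinj : Function.Injective φ)
    (hadj : ∀ a b, G.Adj (φ a) (φ b) ↔ H.Adj a b) (S : Finset W') [DecidableEq W'] :
    IsPMS G (S.image φ) ↔ IsPMS H S := by
  constructor
  · rintro ⟨M, ⟨hMe, hMm⟩, hMc⟩
    rcases S.eq_empty_or_nonempty with rfl | ⟨w0, hw0⟩
    · exact isPMS_empty H
    have hne : Nonempty W' := ⟨w0⟩
    set ψ := Function.invFun φ with hψdef
    have hψ : ∀ a, ψ (φ a) = a := fun a => Function.leftInverse_invFun hinj a
    have hendp : ∀ e ∈ M, ∀ x ∈ e, ∃ a, a ∈ S ∧ φ a = x := by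
      intro e he x hx
      have := (hMc x).2 ⟨e, he, hx⟩
      simpa [Finset.mem_image] using this
    refine ⟨M.image (Sym2.map ψ), ⟨?_, ?_⟩, ?_⟩
    · intro e he
      obtain ⟨e0, he0, rfl⟩ := Finset.mem_image.1 (Finset.mem_coe.1 he)
      induction e0 using Sym2.ind with
      | _ x y =>
        obtain ⟨a, _, rfl⟩ := hendp _ he0 x (Sym2.mem_mk_left x y)
        obtain ⟨b, _, rfl⟩ := hendp _ he0 y (Sym2.mem_mk_right _ _)
        have hG : G.Adj (φ a) (φ b) := (SimpleGraph.mem_edgeSet _).1 (hMe he0)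
        rw [Sym2.map_pair_eq, hψ, hψ]
        exact (SimpleGraph.mem_edgeSet _).2 ((hadj a b).1 hG)
    · intro e he f hf hef x hxe hxf
      obtain ⟨e0, he0, rfl⟩ := Finset.mem_image.1 he
      obtain ⟨f0, hf0, rfl⟩ := Finset.mem_image.1 hf
      have hne0 : e0 ≠ f0 := fun h => hef (h ▸ rfl)
      obtain ⟨u, hu, rfl⟩ := Sym2.mem_map.1 hxe
      obtain ⟨u', hu', hψu⟩ := Sym2.mem_map.1 hxf
      obtain ⟨a, _, rfl⟩ := hendp _ he0 u hu
      obtain ⟨b, _, rfl⟩ := hendp _ hf0 u' hu'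
      rw [hψ, hψ] at hψu
      subst hψu
      exact hMm e0 he0 f0 hf0 hne0 _ hu hu'
    · intro x
      constructor
      · intro hx
        obtain ⟨e, he, hxe⟩ := (hMc (φ x)).1 (Finset.mem_image_of_mem φ hx)
        exact ⟨Sym2.map ψ e, Finset.mem_image_of_mem _ he,
          hψ x ▸ Sym2.mem_map.2 ⟨φ x, hxe, rfl⟩⟩
      · rintro ⟨e, he, hxe⟩
        obtain ⟨e0, he0, rfl⟩ := Finset.mem_image.1 he
        obtain ⟨u, hu, rfl⟩ := Sym2.mem_map.1 hxe
        obtain ⟨a, haS, rfl⟩ := hendp _ he0 u hu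
        rw [hψ]
        exact haS
  · rintro ⟨M, ⟨hMe, hMm⟩, hMc⟩
    refine ⟨M.image (Sym2.map φ), ⟨?_, ?_⟩, ?_⟩
    · intro e he
      obtain ⟨e0, he0, rfl⟩ := Finset.mem_image.1 (Finset.mem_coe.1 he)
      induction e0 using Sym2.ind with
      | _ x y =>
        have hH : H.Adj x y := (SimpleGraph.mem_edgeSet _).1 (hMe he0)
        rw [Sym2.map_pair_eq]
        exact (SimpleGraph.mem_edgeSet _).2 ((hadj x y).2 hH)
    · intro e he f hf hef x hxe hxf
      obtain ⟨e0, he0, rfl⟩ := Finset.mem_image.1 he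
      obtain ⟨f0, hf0, rfl⟩ := Finset.mem_image.1 hf
      have hne0 : e0 ≠ f0 := fun h => hef (h ▸ rfl)
      obtain ⟨u, hu, rfl⟩ := Sym2.mem_map.1 hxe
      obtain ⟨u', hu', hφu⟩ := Sym2.mem_map.1 hxf
      have := hinj hφu
      subst this
      exact hMm e0 he0 f0 hf0 hne0 _ hu hu'
    · intro x
      constructor
      · intro hx
        obtain ⟨a, haS, rfl⟩ := Finset.mem_image.1 hx
        obtain ⟨e, he, hae⟩ := (hMc a).1 haS
        exact ⟨Sym2.map φ e, Finset.mem_image_of_mem _ he, Sym2.mem_map.2 ⟨a, hae, rfl⟩⟩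
      · rintro ⟨e, he, hxe⟩
        obtain ⟨e0, he0, rfl⟩ := Finset.mem_image.1 he
        obtain ⟨u, hu, rfl⟩ := Sym2.mem_map.1 hxe
        exact Finset.mem_image_of_mem φ ((hMc u).2 ⟨e0, he0, hu⟩)

lemma pmPoly_image {W' : Type*} [Fintype W'] [DecidableEq W'] {H : SimpleGraph W'} {φ : W' → W} {A : Finset W}
    (hinj : Function.Injective φ)
    (himg : Finset.univ.image φ = A)
    (hadj : ∀ a b, G.Adj (φ a) (φ b) ↔ H.Adj a b) :
    pmPoly G A = pmPoly H Finset.univ := by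
  classical
  rw [pmPoly, pmPoly]
  refine (Finset.sum_nbij' (fun S => S.image φ) (fun S => S.preimage φ hinj.injOn) ?_ ?_ ?_ ?_ ?_).symm
  · intro S hS
    rw [Finset.mem_powerset] at hS ⊢
    rw [← himg]
    exact Finset.image_subset_image hS
  · intro S _
    exact Finset.mem_powerset.2 (Finset.subset_univ _)
  · intro S _
    ext a
    simp only [Finset.mem_preimage, Finset.mem_image]
    exact ⟨fun ⟨b, hb, hba⟩ => hinj hba ▸ hb, fun h => ⟨a, h, rfl⟩⟩
  · intro S hS
    rw [Finset.mem_powerset, ← himg] at hS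
    ext x
    simp only [Finset.mem_image, Finset.mem_preimage]
    constructor
    · rintro ⟨a, ha, rfl⟩; exact ha
    · intro hx
      obtain ⟨a, _, rfl⟩ := Finset.mem_image.1 (hS hx)
      exact ⟨a, hx, rfl⟩
  · intro S _
    rw [Finset.card_image_of_injective _ hinj, isPMS_image hinj hadj]

open Classical in
lemma sum_root {ι : Type*} [Fintype ι] [DecidableEq ι]
    {ρ : W} {χ : ι → W} {T : ι → Finset W} {B : Finset W}
    (hpart : B = Finset.univ.biUnion T)
    (hρB : ρ ∉ B)
    (hsep : ∀ c c', c ≠ c' → ∀ x ∈ T c, ∀ y ∈ T c', ¬ G.Adj x y ∧ x ≠ y)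
    (hχT : ∀ c, χ c ∈ T c)
    (hadjχ : ∀ c, G.Adj ρ (χ c))
    (hnbr : ∀ y ∈ B, G.Adj ρ y → ∃ c, y = χ c) :
    ∑ t ∈ B.powerset, (if IsPMS G (insert ρ t) then (X : Polynomial ℤ) ^ ((t.card + 1) / 2) else 0)
      = ∑ c : ι, X * pmPoly G (B.erase (χ c)) := by
  have hχB : ∀ c, χ c ∈ B := fun c =>
    hpart ▸ Finset.mem_biUnion.2 ⟨c, Finset.mem_univ c, hχT c⟩
  have hsep' : ∀ c ∈ (Finset.univ : Finset ι), ∀ c' ∈ (Finset.univ : Finset ι), c ≠ c' →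
      ∀ x ∈ T c, ∀ y ∈ T c', ¬ G.Adj x y ∧ x ≠ y := fun c _ c' _ h => hsep c c' h
  -- Claim A
  have claimA : ∀ t ∈ B.powerset,
      (IsPMS G (insert ρ t) ↔ ∃ c, χ c ∈ t ∧ IsPMS G (t.erase (χ c))) := by
    intro t ht
    rw [Finset.mem_powerset] at ht
    have hρt : ρ ∉ t := fun h => hρB (ht h)
    constructor
    · rintro ⟨M, ⟨hMe, hMm⟩, hMc⟩
      obtain ⟨e, heM, hρe⟩ := (hMc ρ).1 (Finset.mem_insert_self ρ t)
      obtain ⟨y, rfl⟩ := Sym2.mem_iff_exists.1 hρe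
      have hadjy : G.Adj ρ y := (SimpleGraph.mem_edgeSet _).1 (hMe heM)
      have hyt : y ∈ t := by
        have : y ∈ insert ρ t := (hMc y).2 ⟨_, heM, Sym2.mem_mk_right _ _⟩
        rcases Finset.mem_insert.1 this with rfl | h
        · exact absurd rfl hadjy.ne'
        · exact h
      obtain ⟨c, rfl⟩ := hnbr y (ht hyt) hadjy
      refine ⟨c, hyt, M.erase (s(ρ, χ c)), ⟨?_, ?_⟩, ?_⟩
      · intro f hf
        exact hMe (Finset.mem_coe.2 (Finset.mem_of_mem_erase (Finset.mem_coe.1 hf)))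
      · intro f hf g hg hfg x hxf
        exact hMm f (Finset.mem_of_mem_erase hf) g (Finset.mem_of_mem_erase hg) hfg x hxf
      · intro x
        constructor
        · intro hx
          obtain ⟨hxne, hxt⟩ := Finset.mem_erase.1 hx
          obtain ⟨f, hfM, hxfe⟩ := (hMc x).1 (Finset.mem_insert_of_mem hxt)
          refine ⟨f, Finset.mem_erase.2 ⟨?_, hfM⟩, hxfe⟩
          rintro rfl
          rcases Sym2.mem_iff.1 hxfe with rfl | rfl
          · exact hρB (ht hxt)
          · exact hxne rfl
        · rintro ⟨f, hf, hxf⟩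
          obtain ⟨hfne, hfM⟩ := Finset.mem_erase.1 hf
          have hxins : x ∈ insert ρ t := (hMc x).2 ⟨f, hfM, hxf⟩
          have hxρ : x ≠ ρ := by
            rintro rfl
            exact hMm f hfM _ heM hfne _ hxf hρe
          have hxχ : x ≠ χ c := by
            rintro rfl
            exact hMm f hfM _ heM hfne _ hxf (Sym2.mem_mk_right _ _)
          exact Finset.mem_erase.2 ⟨hxχ, (Finset.mem_insert.1 hxins).resolve_left hxρ⟩
    · rintro ⟨c, hct, M', ⟨hMe', hMm'⟩, hMc'⟩
      have hend' : ∀ f ∈ M', ∀ x ∈ f, x ∈ t.erase (χ c) := fun f hf x hx => (hMc' x).2 ⟨f, hf, hx⟩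
      refine ⟨insert (s(ρ, χ c)) M', ⟨?_, ?_⟩, ?_⟩
      · intro f hf
        rcases Finset.mem_insert.1 (Finset.mem_coe.1 hf) with rfl | h
        · exact (SimpleGraph.mem_edgeSet _).2 (hadjχ c)
        · exact hMe' (Finset.mem_coe.2 h)
      · intro f hf g hg hfg x hxf hxg
        rcases Finset.mem_insert.1 hf with rfl | hf' <;> rcases Finset.mem_insert.1 hg with rfl | hg'
        · exact hfg rfl
        · have hxt : x ∈ t.erase (χ c) := hend' g hg' x hxg
          rcases Sym2.mem_iff.1 hxf with rfl | rfl
          · exact hρB (ht (Finset.mem_of_mem_erase hxt))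
          · exact (Finset.mem_erase.1 hxt).1 rfl
        · have hxt : x ∈ t.erase (χ c) := hend' f hf' x hxf
          rcases Sym2.mem_iff.1 hxg with rfl | rfl
          · exact hρB (ht (Finset.mem_of_mem_erase hxt))
          · exact (Finset.mem_erase.1 hxt).1 rfl
        · exact hMm' f hf' g hg' hfg x hxf hxg
      · intro x
        constructor
        · intro hx
          rcases Finset.mem_insert.1 hx with hxρ | hxt
          · refine ⟨s(ρ, χ c), Finset.mem_insert_self _ _, ?_⟩
            rw [hxρ]
            exact Sym2.mem_mk_left _ _
          · by_cases hxχ : x = χ c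
            · subst hxχ
              exact ⟨s(ρ, χ c), Finset.mem_insert_self _ _, Sym2.mem_mk_right _ _⟩
            · obtain ⟨f, hf, hxf⟩ := (hMc' x).1 (Finset.mem_erase.2 ⟨hxχ, hxt⟩)
              exact ⟨f, Finset.mem_insert_of_mem hf, hxf⟩
        · rintro ⟨f, hf, hxf⟩
          rcases Finset.mem_insert.1 hf with rfl | hf'
          · rcases Sym2.mem_iff.1 hxf with rfl | rfl
            · exact Finset.mem_insert_self _ _
            · exact Finset.mem_insert_of_mem hct
          · exact Finset.mem_insert_of_mem
              (Finset.mem_of_mem_erase (hend' f hf' x hxf))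
  -- Claim B : uniqueness
  have claimB : ∀ t ∈ B.powerset, ∀ c c',
      (χ c ∈ t ∧ IsPMS G (t.erase (χ c))) → (χ c' ∈ t ∧ IsPMS G (t.erase (χ c'))) → c = c' := by
    intro t ht c c' ⟨hc, hPc⟩ ⟨hc', hPc'⟩
    by_contra hne
    rw [Finset.mem_powerset] at ht
    have hsub : ∀ d : ι, t.erase (χ d) ⊆ Finset.univ.biUnion T :=
      fun d => (Finset.erase_subset _ _).trans (ht.trans (le_of_eq hpart))
    have h1 : IsPMS G ((t.erase (χ c)) ∩ T c) :=
      (isPMS_piece hsep' (hsub c)).1 hPc c (Finset.mem_univ c)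
    have h2 : IsPMS G ((t.erase (χ c')) ∩ T c) :=
      (isPMS_piece hsep' (hsub c')).1 hPc' c (Finset.mem_univ c)
    have he1 : (t.erase (χ c)) ∩ T c = (t ∩ T c).erase (χ c) := by
      ext x
      simp only [Finset.mem_inter, Finset.mem_erase]
      tauto
    have he2 : (t.erase (χ c')) ∩ T c = t ∩ T c := by
      ext x
      simp only [Finset.mem_inter, Finset.mem_erase]
      constructor
      · rintro ⟨⟨_, h⟩, h2⟩; exact ⟨h, h2⟩
      · rintro ⟨h, h2⟩
        refine ⟨⟨?_, h⟩, h2⟩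
        rintro rfl
        exact (hsep c' c (Ne.symm hne) (χ c') (hχT c') (χ c') h2).2 rfl
    have hχtc : χ c ∈ t ∩ T c := Finset.mem_inter.2 ⟨hc, hχT c⟩
    have hcard1 : Even ((t ∩ T c).erase (χ c)).card := (he1 ▸ h1).even_card
    have hcard2 : Even (t ∩ T c).card := (he2 ▸ h2).even_card
    rw [Finset.card_erase_of_mem hχtc] at hcard1
    have hpos : 0 < (t ∩ T c).card := Finset.card_pos.2 ⟨χ c, hχtc⟩
    obtain ⟨a, ha⟩ := hcard1
    obtain ⟨b, hb⟩ := hcard2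
    omega
  -- rewrite the summand using the indicator over ι
  have hmid : ∀ t ∈ B.powerset,
      (if IsPMS G (insert ρ t) then (X : Polynomial ℤ) ^ ((t.card + 1) / 2) else 0)
        = ∑ c : ι, (if χ c ∈ t ∧ IsPMS G (t.erase (χ c))
            then (X : Polynomial ℤ) ^ ((t.card + 1) / 2) else 0) := by
    intro t ht
    by_cases hex : ∃ c, χ c ∈ t ∧ IsPMS G (t.erase (χ c))
    · obtain ⟨c0, hc0⟩ := hex
      rw [if_pos ((claimA t ht).2 ⟨c0, hc0⟩)]
      rw [Finset.sum_eq_single c0]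
      · rw [if_pos hc0]
      · intro c _ hcc
        rw [if_neg]
        intro hP
        exact hcc (claimB t ht c c0 hP hc0)
      · intro h
        exact absurd (Finset.mem_univ c0) h
    · rw [if_neg (fun h => hex ((claimA t ht).1 h))]
      exact (Finset.sum_eq_zero (fun c _ => if_neg (fun h => hex ⟨c, h⟩))).symm
  rw [Finset.sum_congr rfl hmid, Finset.sum_comm]
  refine Finset.sum_congr rfl (fun c _ => ?_)
  -- inner sum for a fixed c
  have hBsplit : B = insert (χ c) (B.erase (χ c)) := (Finset.insert_erase (hχB c)).symm
  have hχnot : χ c ∉ B.erase (χ c) := Finset.notMem_erase _ _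
  rw [hBsplit, Finset.sum_powerset_insert hχnot]
  have hfirst : ∑ t ∈ (B.erase (χ c)).powerset,
      (if χ c ∈ t ∧ IsPMS G (t.erase (χ c)) then (X : Polynomial ℤ) ^ ((t.card + 1) / 2) else 0)
      = 0 := by
    refine Finset.sum_eq_zero (fun t ht => ?_)
    rw [Finset.mem_powerset] at ht
    exact if_neg (fun h => (Finset.mem_erase.1 (ht h.1)).1 rfl)
  rw [hfirst, zero_add, Finset.erase_insert hχnot, pmPoly, Finset.mul_sum]
  refine Finset.sum_congr rfl (fun t ht => ?_)
  rw [Finset.mem_powerset] at ht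
  have hχt : χ c ∉ t := fun h => (Finset.mem_erase.1 (ht h)).1 rfl
  have herase : (insert (χ c) t).erase (χ c) = t := Finset.erase_insert hχt
  have hcard : (insert (χ c) t).card = t.card + 1 := Finset.card_insert_of_notMem hχt
  by_cases hP : IsPMS G t
  · rw [if_pos ⟨Finset.mem_insert_self _ _, herase.symm ▸ hP⟩, if_pos hP, hcard]
    obtain ⟨a, ha⟩ := hP.even_card
    have : (t.card + 1 + 1) / 2 = t.card / 2 + 1 := by omega
    rw [this, pow_succ]
    ring
  · rw [if_neg, if_neg hP, mul_zero]
    intro ⟨_, h⟩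
    rw [herase] at h
    exact hP h

open Classical in
lemma pmPoly_insert_split {ρ : W} {B : Finset W} (h : ρ ∉ B) :
    pmPoly G (insert ρ B) = pmPoly G B
      + ∑ t ∈ B.powerset, (if IsPMS G (insert ρ t)
          then (X : Polynomial ℤ) ^ ((t.card + 1) / 2) else 0) := by
  rw [pmPoly, Finset.sum_powerset_insert h, pmPoly]
  congr 1
  refine Finset.sum_congr rfl fun t ht => ?_
  rw [Finset.card_insert_of_notMem (fun hh => h (Finset.mem_powerset.1 ht hh))]

end Aux


section Tree

variable {k r : ℕ}

/-- vertex type of the `k`-ary tree of rank `r` -/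
abbrev KV (k r : ℕ) := (i : Fin (r + 1)) × (Fin (i : ℕ) → Fin k)

def KRel (a b : KV k r) : Prop :=
  ((b.1 : ℕ) = (a.1 : ℕ) + 1) ∧
    ∀ (t : ℕ) (h1 : t < (a.1 : ℕ)) (h2 : t < (b.1 : ℕ)), a.2 ⟨t, h1⟩ = b.2 ⟨t, h2⟩

lemma KRel.ne {a b : KV k r} (h : KRel a b) : a ≠ b := by
  intro hab
  subst hab
  exact Nat.succ_ne_self _ h.1.symm

lemma karyTree_adj {a b : KV k r} : (karyTree k r).Adj a b ↔ KRel a b ∨ KRel b a := by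
  rw [karyTree, SimpleGraph.fromRel_adj]
  constructor
  · rintro ⟨-, h⟩; exact h
  · rintro h
    refine ⟨?_, h⟩
    rcases h with h | h
    · exact h.ne
    · exact h.ne.symm

def kroot (k r : ℕ) : KV k r := ⟨⟨0, Nat.succ_pos r⟩, Fin.elim0⟩

lemma depth_zero {v : KV k r} (h : (v.1 : ℕ) = 0) : v = kroot k r := by
  obtain ⟨⟨i, hi⟩, f⟩ := v
  simp only at h
  subst h
  have hf : f = Fin.elim0 := funext (fun x => x.elim0)
  subst hf
  rfl

def kpush (c : Fin k) (v : KV k r) : KV k (r + 1) :=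
  ⟨⟨(v.1 : ℕ) + 1, Nat.succ_lt_succ v.1.isLt⟩, Fin.cons c v.2⟩

lemma kpush_fst (c : Fin k) (v : KV k r) : ((kpush c v).1 : ℕ) = (v.1 : ℕ) + 1 := rfl

lemma kpush_snd_zero (c : Fin k) (v : KV k r) (h : 0 < ((kpush c v).1 : ℕ)) :
    (kpush c v).2 ⟨0, h⟩ = c := rfl

lemma kpush_snd_succ (c : Fin k) (v : KV k r) (t : ℕ) (h : t + 1 < ((kpush c v).1 : ℕ))
    (h' : t < (v.1 : ℕ)) : (kpush c v).2 ⟨t + 1, h⟩ = v.2 ⟨t, h'⟩ := rfl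

lemma kpush_injective (c : Fin k) : Function.Injective (kpush (r := r) c) := by
  rintro ⟨⟨i, hi⟩, f⟩ ⟨⟨j, hj⟩, g⟩ h
  rw [kpush, kpush, Sigma.mk.inj_iff] at h
  obtain ⟨h1, h2⟩ := h
  have hij : i = j := by
    have := congrArg Fin.val h1
    simpa using this
  subst hij
  simp only [heq_eq_eq] at h2
  have hfg : f = g := by
    funext t
    have := congrFun h2 t.succ
    rwa [Fin.cons_succ, Fin.cons_succ] at this
  rw [Sigma.mk.inj_iff]
  exact ⟨rfl, heq_of_eq hfg⟩

lemma krel_kpush {c : Fin k} {a b : KV k r} : KRel (kpush c a) (kpush c b) ↔ KRel a b := by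
  constructor
  · rintro ⟨h1, h2⟩
    refine ⟨by simpa [kpush_fst] using h1, ?_⟩
    intro t ht1 ht2
    have := h2 (t + 1) (by rwa [kpush_fst, Nat.add_lt_add_iff_right])
      (by rwa [kpush_fst, Nat.add_lt_add_iff_right])
    rwa [kpush_snd_succ c a t _ ht1, kpush_snd_succ c b t _ ht2] at this
  · rintro ⟨h1, h2⟩
    refine ⟨by simpa [kpush_fst] using h1, ?_⟩
    intro t ht1 ht2
    rcases t with _ | t
    · rw [kpush_snd_zero, kpush_snd_zero]
    · have ht1' : t < (a.1 : ℕ) := by rwa [kpush_fst, Nat.add_lt_add_iff_right] at ht1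
      have ht2' : t < (b.1 : ℕ) := by rwa [kpush_fst, Nat.add_lt_add_iff_right] at ht2
      rw [kpush_snd_succ c a t _ ht1', kpush_snd_succ c b t _ ht2']
      exact h2 t ht1' ht2'

lemma kpush_adj {c : Fin k} {a b : KV k r} :
    (karyTree k (r + 1)).Adj (kpush c a) (kpush c b) ↔ (karyTree k r).Adj a b := by
  rw [karyTree_adj, karyTree_adj, krel_kpush, krel_kpush]

lemma mem_image_kpush {c : Fin k} {v : KV k (r + 1)} :
    v ∈ Finset.univ.image (kpush (r := r) c) ↔
      ∃ h : 0 < (v.1 : ℕ), v.2 ⟨0, h⟩ = c := by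
  constructor
  · intro hv
    obtain ⟨a, _, rfl⟩ := Finset.mem_image.1 hv
    exact ⟨Nat.succ_pos _, kpush_snd_zero c a _⟩
  · rintro ⟨h0, hc⟩
    obtain ⟨⟨i, hi⟩, f⟩ := v
    simp only at h0 hc
    rcases i with _ | j
    · omega
    · have hj : j < r + 1 := by omega
      refine Finset.mem_image.2 ⟨⟨⟨j, hj⟩, fun t => f ⟨(t : ℕ) + 1, Nat.succ_lt_succ t.isLt⟩⟩,
        Finset.mem_univ _, ?_⟩
      rw [kpush, Sigma.mk.inj_iff]
      refine ⟨rfl, ?_⟩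
      rw [heq_eq_eq]
      funext x
      rcases x with ⟨xv, hxv⟩
      rcases xv with _ | xt
      · exact hc.symm
      · rfl

end Tree


section Tree2

variable {k r : ℕ}

lemma univ_erase_root :
    (Finset.univ : Finset (KV k (r + 1))).erase (kroot k (r + 1)) =
      Finset.univ.biUnion (fun c : Fin k => Finset.univ.image (kpush c)) := by
  ext v
  constructor
  · intro hv
    have hvne := (Finset.mem_erase.1 hv).1
    have h0 : 0 < (v.1 : ℕ) := by
      rcases Nat.eq_zero_or_pos (v.1 : ℕ) with h | h
      · exact absurd (depth_zero h) hvne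
      · exact h
    exact Finset.mem_biUnion.2 ⟨v.2 ⟨0, h0⟩, Finset.mem_univ _, mem_image_kpush.2 ⟨h0, rfl⟩⟩
  · intro hv
    obtain ⟨c, -, hc⟩ := Finset.mem_biUnion.1 hv
    refine Finset.mem_erase.2 ⟨?_, Finset.mem_univ _⟩
    obtain ⟨h0, -⟩ := mem_image_kpush.1 hc
    intro hroot
    rw [hroot] at h0
    exact Nat.lt_irrefl 0 h0

lemma mem_image_kpush2 {c d : Fin k} {v : KV k (r + 2)}
    (hv : v ∈ Finset.univ.image (fun a : KV k r => kpush c (kpush d a))) :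
    ∃ h1 : 1 < (v.1 : ℕ), v.2 ⟨0, by omega⟩ = c ∧ v.2 ⟨1, h1⟩ = d := by
  obtain ⟨a, -, rfl⟩ := Finset.mem_image.1 hv
  exact ⟨Nat.succ_lt_succ (Nat.succ_pos _), rfl, rfl⟩

lemma mem_image2_sub_image {c d : Fin k} {v : KV k (r + 2)}
    (hv : v ∈ Finset.univ.image (fun a : KV k r => kpush c (kpush d a))) :
    v ∈ Finset.univ.image (kpush (r := r + 1) c) := by
  obtain ⟨a, -, rfl⟩ := Finset.mem_image.1 hv
  exact Finset.mem_image.2 ⟨kpush d a, Finset.mem_univ _, rfl⟩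

lemma erase_image (c : Fin k) :
    (Finset.univ.image (kpush (r := r + 1) c)).erase (kpush c (kroot k (r + 1))) =
      Finset.univ.biUnion
        (fun d : Fin k => Finset.univ.image (fun a : KV k r => kpush c (kpush d a))) := by
  have hnm : kpush c (kroot k (r + 1)) ∉
      ((Finset.univ : Finset (KV k (r + 1))).erase (kroot k (r + 1))).image (kpush c) := by
    intro h
    obtain ⟨a, ha, heq⟩ := Finset.mem_image.1 h
    have := kpush_injective c heq
    subst this
    exact (Finset.mem_erase.1 ha).1 rfl
  conv_lhs =>
    rw [show (Finset.univ : Finset (KV k (r + 1)))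
      = insert (kroot k (r + 1)) (Finset.univ.erase (kroot k (r + 1))) from
        (Finset.insert_erase (Finset.mem_univ _)).symm]
  rw [Finset.image_insert, Finset.erase_insert hnm, univ_erase_root, Finset.biUnion_image]
  refine Finset.biUnion_congr rfl (fun d _ => ?_)
  rw [Finset.image_image]
  rfl

lemma sep_T {c c' : Fin k} (h : c ≠ c') :
    ∀ x ∈ Finset.univ.image (kpush (r := r) c), ∀ y ∈ Finset.univ.image (kpush (r := r) c'),
      ¬ (karyTree k (r + 1)).Adj x y ∧ x ≠ y := by
  intro x hx y hy
  obtain ⟨hx0, hxc⟩ := mem_image_kpush.1 hx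
  obtain ⟨hy0, hyc⟩ := mem_image_kpush.1 hy
  constructor
  · intro hadj
    rcases karyTree_adj.1 hadj with ⟨-, h2⟩ | ⟨-, h2⟩
    · have := h2 0 hx0 hy0
      rw [hxc, hyc] at this
      exact h this
    · have := h2 0 hy0 hx0
      rw [hxc, hyc] at this
      exact h this.symm
  · rintro rfl
    rw [hxc] at hyc
    exact h hyc

lemma sep_T2 {c d d' : Fin k} (h : d ≠ d') :
    ∀ x ∈ Finset.univ.image (fun a : KV k r => kpush c (kpush d a)),
      ∀ y ∈ Finset.univ.image (fun a : KV k r => kpush c (kpush d' a)),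
      ¬ (karyTree k (r + 2)).Adj x y ∧ x ≠ y := by
  intro x hx y hy
  obtain ⟨hx1, -, hxd⟩ := mem_image_kpush2 hx
  obtain ⟨hy1, -, hyd⟩ := mem_image_kpush2 hy
  constructor
  · intro hadj
    rcases karyTree_adj.1 hadj with ⟨-, h2⟩ | ⟨-, h2⟩
    · have := h2 1 hx1 hy1
      rw [hxd, hyd] at this
      exact h this
    · have := h2 1 hy1 hx1
      rw [hxd, hyd] at this
      exact h this.symm
  · rintro rfl
    rw [hxd] at hyd
    exact h hyd

lemma adj_root_child (c : Fin k) :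
    (karyTree k (r + 1)).Adj (kroot k (r + 1)) (kpush c (kroot k r)) := by
  refine karyTree_adj.2 (Or.inl ⟨rfl, ?_⟩)
  intro t h1 h2
  exact absurd h1 (Nat.not_lt_zero t)

lemma root_nbr {y : KV k (r + 1)} (hadj : (karyTree k (r + 1)).Adj (kroot k (r + 1)) y) :
    ∃ c, y = kpush c (kroot k r) := by
  rcases karyTree_adj.1 hadj with ⟨h1, -⟩ | ⟨h1, -⟩
  · have hy1 : (y.1 : ℕ) = 1 := h1
    have h0 : 0 < (y.1 : ℕ) := by omega
    have hmem : y ∈ Finset.univ.image (kpush (r := r) (y.2 ⟨0, h0⟩)) :=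
      mem_image_kpush.2 ⟨h0, rfl⟩
    obtain ⟨a, -, ha⟩ := Finset.mem_image.1 hmem
    have ha0 : (a.1 : ℕ) = 0 := by
      have h2 := kpush_fst (y.2 ⟨0, h0⟩) a
      rw [ha] at h2
      omega
    exact ⟨y.2 ⟨0, h0⟩, ha.symm.trans (congrArg _ (depth_zero ha0))⟩
  · have h1' : (0 : ℕ) = (y.1 : ℕ) + 1 := h1
    omega
end Tree2

set_option maxHeartbeats 1000000

/-- for `r ≥ 2`,
`p(Λ_{k,r}; z) = p(Λ_{k,r−1}; z)^k + k·z·p(Λ_{k,r−2}; z)^k·p(Λ_{k,r−1}; z)^{k−1}`. -/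
theorem stmt16 (k r : ℕ) (hr : 2 ≤ r) :
    pmPoly (karyTree k r) Finset.univ =
      pmPoly (karyTree k (r - 1)) Finset.univ ^ k +
        (k : Polynomial ℤ) * X * pmPoly (karyTree k (r - 2)) Finset.univ ^ k *
          pmPoly (karyTree k (r - 1)) Finset.univ ^ (k - 1) := by
  classical
  obtain ⟨m, rfl⟩ : ∃ m, r = m + 2 := ⟨r - 2, by omega⟩
  have e1 : m + 2 - 1 = m + 1 := rfl
  have e2 : m + 2 - 2 = m := rfl
  rw [e1, e2]
  set G := karyTree k (m + 2) with hGdef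
  set ρ : KV k (m + 2) := kroot k (m + 2) with hρdef
  set T : Fin k → Finset (KV k (m + 2)) := fun c => Finset.univ.image (kpush c) with hTdef
  set χ : Fin k → KV k (m + 2) := fun c => kpush c (kroot k (m + 1)) with hχdef
  set p1 := pmPoly (karyTree k (m + 1)) (Finset.univ) with hp1
  set p2 := pmPoly (karyTree k m) (Finset.univ) with hp2
  have hpart : (Finset.univ : Finset (KV k (m + 2))).erase ρ = Finset.univ.biUnion T :=
    univ_erase_root
  have hsepT : ∀ c c', c ≠ c' → ∀ x ∈ T c, ∀ y ∈ T c', ¬ G.Adj x y ∧ x ≠ y :=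
    fun c c' h => sep_T h
  have hsepT' : ∀ c ∈ (Finset.univ : Finset (Fin k)), ∀ c' ∈ (Finset.univ : Finset (Fin k)),
      c ≠ c' → ∀ x ∈ T c, ∀ y ∈ T c', ¬ G.Adj x y ∧ x ≠ y :=
    fun c _ c' _ h => hsepT c c' h
  have hχT : ∀ c, χ c ∈ T c := fun c => Finset.mem_image_of_mem _ (Finset.mem_univ _)
  have hρB : ρ ∉ Finset.univ.biUnion T := hpart ▸ Finset.notMem_erase _ _
  have hadjχ : ∀ c, G.Adj ρ (χ c) := fun c => adj_root_child c
  have hnbr : ∀ y ∈ Finset.univ.biUnion T, G.Adj ρ y → ∃ c, y = χ c :=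
    fun y _ h => root_nbr h
  have hTc : ∀ c, pmPoly G (T c) = p1 := fun c =>
    pmPoly_image (kpush_injective c) rfl (fun a b => kpush_adj)
  -- the polynomial of the forest with all subtrees
  have hforest : pmPoly G (Finset.univ.erase ρ) = p1 ^ k := by
    rw [hpart, pmPoly_biUnion hsepT']
    rw [Finset.prod_congr rfl (fun c _ => hTc c), Finset.prod_const, Finset.card_univ,
      Fintype.card_fin]
  -- the polynomial of the forest minus one subtree's root
  have key2 : ∀ c : Fin k,
      pmPoly G (((Finset.univ : Finset (KV k (m + 2))).erase ρ).erase (χ c))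
        = p2 ^ k * p1 ^ (k - 1) := by
    intro c
    have hU : (Finset.univ : Finset (Fin k)).biUnion T
        = T c ∪ (Finset.univ.erase c).biUnion T := by
      conv_lhs => rw [show (Finset.univ : Finset (Fin k))
        = insert c (Finset.univ.erase c) from (Finset.insert_erase (Finset.mem_univ c)).symm]
      rw [Finset.biUnion_insert]
    have hχrest : χ c ∉ (Finset.univ.erase c).biUnion T := by
      intro h
      obtain ⟨c', hc', hmem⟩ := Finset.mem_biUnion.1 h
      exact (hsepT c' c (Finset.mem_erase.1 hc').1 (χ c) hmem (χ c) (hχT c)).2 rfl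
    have hTerase : (T c).erase (χ c) = Finset.univ.biUnion
        (fun d : Fin k => Finset.univ.image (fun a : KV k m => kpush c (kpush d a))) :=
      erase_image c
    have hsplit : ((Finset.univ : Finset (KV k (m + 2))).erase ρ).erase (χ c)
        = (Finset.univ.biUnion
            (fun d : Fin k => Finset.univ.image (fun a : KV k m => kpush c (kpush d a))))
          ∪ ((Finset.univ.erase c).biUnion T) := by
      rw [hpart, hU, Finset.erase_union_distrib, Finset.erase_eq_of_notMem hχrest, hTerase]
    have hsepMix : ∀ x ∈ Finset.univ.biUnion
        (fun d : Fin k => Finset.univ.image (fun a : KV k m => kpush c (kpush d a))),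
        ∀ y ∈ (Finset.univ.erase c).biUnion T, ¬ G.Adj x y ∧ x ≠ y := by
      intro x hx y hy
      obtain ⟨d, -, hxd⟩ := Finset.mem_biUnion.1 hx
      obtain ⟨c', hc', hyc⟩ := Finset.mem_biUnion.1 hy
      exact hsepT c c' (fun h => (Finset.mem_erase.1 hc').1 h.symm) x
        (mem_image2_sub_image hxd) y hyc
    have hsepT2' : ∀ d ∈ (Finset.univ : Finset (Fin k)), ∀ d' ∈ (Finset.univ : Finset (Fin k)),
        d ≠ d' → ∀ x ∈ Finset.univ.image (fun a : KV k m => kpush c (kpush d a)),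
          ∀ y ∈ Finset.univ.image (fun a : KV k m => kpush c (kpush d' a)),
          ¬ G.Adj x y ∧ x ≠ y :=
      fun d _ d' _ h => sep_T2 h
    have hsepImg : ∀ c' ∈ Finset.univ.erase c, ∀ c'' ∈ Finset.univ.erase c, c' ≠ c'' →
        ∀ x ∈ T c', ∀ y ∈ T c'', ¬ G.Adj x y ∧ x ≠ y :=
      fun c' _ c'' _ h => hsepT c' c'' h
    have hT2c : ∀ d : Fin k,
        pmPoly G (Finset.univ.image (fun a : KV k m => kpush c (kpush d a))) = p2 := by
      intro d
      refine pmPoly_image (fun a b h => kpush_injective d (kpush_injective c h)) rfl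
        (fun a b => ?_)
      exact (kpush_adj (c := c)).trans (kpush_adj (c := d))
    rw [hsplit, pmPoly_union hsepMix, pmPoly_biUnion hsepT2', pmPoly_biUnion hsepImg]
    rw [Finset.prod_congr rfl (fun d _ => hT2c d), Finset.prod_const, Finset.card_univ,
      Fintype.card_fin]
    rw [Finset.prod_congr rfl (fun c' _ => hTc c'), Finset.prod_const,
      Finset.card_erase_of_mem (Finset.mem_univ c), Finset.card_univ, Fintype.card_fin]
  have hroot_sum := sum_root (G := G) (ρ := ρ) (χ := χ) (T := T) (B := Finset.univ.erase ρ)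
    hpart (Finset.notMem_erase _ _) hsepT hχT hadjχ
    (fun y hy hadj => hnbr y (hpart ▸ hy) hadj)
  calc pmPoly G Finset.univ
      = pmPoly G (insert ρ (Finset.univ.erase ρ)) := by
        rw [Finset.insert_erase (Finset.mem_univ ρ)]
    _ = p1 ^ k + ∑ c : Fin k, X * pmPoly G ((Finset.univ.erase ρ).erase (χ c)) := by
        rw [pmPoly_insert_split (Finset.notMem_erase _ _), hroot_sum, hforest]
    _ = p1 ^ k + ∑ _c : Fin k, X * (p2 ^ k * p1 ^ (k - 1)) := by
        rw [Finset.sum_congr rfl (fun c _ => by rw [key2 c])]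
    _ = p1 ^ k + (k : Polynomial ℤ) * X * p2 ^ k * p1 ^ (k - 1) := by
        rw [Finset.sum_const, Finset.card_univ, Fintype.card_fin, nsmul_eq_mul]
        ring
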